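/- arXiv:0704.0286 — 3 statements merged into one kernel-verified Lean document; each statement's English description precedes it below -/
import Mathlib

section
/- If f is a compactly supported continuous function on R^d such that Q_k(x) = ∫ |x−y|^{2k} f(y) dy vanishes identically for every nonnegative integer k, then f ≡ 0. -/
open MeasureTheory
noncomputable section

open Real
open scoped RealInnerProductSpace

section VQAux

variable {d : ℕ}

/-- Step A: vanishing of all even moments gives vanishing Gaussian convolution. -/
lemma vq_aux_expA (f : EuclideanSpace ℝ (Fin d) → ℝ) (hf : Continuous f)
    (hsupp : HasCompactSupport f)
    (hQ : ∀ k : ℕ, ∀ x : EuclideanSpace ℝ (Fin d),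
      (∫ y : EuclideanSpace ℝ (Fin d), ‖x - y‖ ^ (2 * k) * f y) = 0)
    (x : EuclideanSpace ℝ (Fin d)) :
    (∫ y : EuclideanSpace ℝ (Fin d), Real.exp (-‖x - y‖ ^ 2) * f y) = 0 := by
  classical
  obtain ⟨r, hr⟩ : ∃ r : ℝ, tsupport f ⊆ Metric.closedBall 0 r :=
    (hsupp.isBounded).subset_closedBall 0
  set R : ℝ := ‖x‖ + |r| with hR
  have hRnn : 0 ≤ R := by positivity
  have hRbound : ∀ y ∈ tsupport f, ‖x - y‖ ≤ R := by
    intro y hy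
    have h1 : ‖y‖ ≤ r := by simpa using hr hy
    calc ‖x - y‖ ≤ ‖x‖ + ‖y‖ := norm_sub_le _ _
      _ ≤ ‖x‖ + |r| := by
          have := le_abs_self r
          linarith
  set F : ℕ → EuclideanSpace ℝ (Fin d) → ℝ :=
    fun k y => ((-1 : ℝ) ^ k * ((k.factorial : ℝ))⁻¹) * (‖x - y‖ ^ (2 * k) * f y) with hF
  have hFc : ∀ k, Continuous (F k) := by
    intro k; apply Continuous.mul continuous_const
    exact ((continuous_const.sub continuous_id).norm.pow _).mul hf
  have hFs : ∀ k, HasCompactSupport (F k) := by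
    intro k
    apply HasCompactSupport.intro hsupp
    intro y hy
    simp [hF, image_eq_zero_of_notMem_tsupport hy]
  have hFi : ∀ k, Integrable (F k) := fun k => (hFc k).integrable_of_hasCompactSupport (hFs k)
  have hfi : Integrable f := hf.integrable_of_hasCompactSupport hsupp
  have habsi : Integrable (fun y => |f y|) := hfi.abs
  have hbound : ∀ k, (∫ y, ‖F k y‖) ≤ ((R ^ 2) ^ k / k.factorial) * ∫ y, |f y| := by
    intro k
    rw [← integral_const_mul]
    refine integral_mono (hFi k).norm (habsi.const_mul _) ?_
    intro y
    show ‖F k y‖ ≤ (R ^ 2) ^ k / (k.factorial : ℝ) * |f y|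
    by_cases hy : f y = 0
    · simp only [hF, hy, mul_zero, norm_zero, abs_zero]
      positivity
    · have hyK : y ∈ tsupport f := subset_tsupport f hy
      have h1 : ‖x - y‖ ^ (2 * k) ≤ (R ^ 2) ^ k := by
        rw [← pow_mul]
        exact pow_le_pow_left₀ (norm_nonneg _) (hRbound y hyK) _
      have h2 : ‖F k y‖ = (k.factorial : ℝ)⁻¹ * (‖x - y‖ ^ (2 * k) * |f y|) := by
        simp only [hF, Real.norm_eq_abs]
        rw [abs_mul, abs_mul, abs_pow, abs_neg, abs_one, one_pow, one_mul, abs_mul]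
        rw [abs_of_nonneg (by positivity : (0:ℝ) ≤ ((k.factorial : ℝ))⁻¹),
            abs_of_nonneg (by positivity : (0:ℝ) ≤ ‖x - y‖ ^ (2 * k))]
      rw [h2, div_eq_mul_inv]
      have h3 : (k.factorial : ℝ)⁻¹ * (‖x - y‖ ^ (2 * k) * |f y|)
          ≤ (k.factorial : ℝ)⁻¹ * ((R ^ 2) ^ k * |f y|) := by
        gcongr
      calc (k.factorial : ℝ)⁻¹ * (‖x - y‖ ^ (2 * k) * |f y|)
          ≤ (k.factorial : ℝ)⁻¹ * ((R ^ 2) ^ k * |f y|) := h3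
        _ = (R ^ 2) ^ k * (k.factorial : ℝ)⁻¹ * |f y| := by ring
  have hsum : Summable fun k => ∫ y, ‖F k y‖ := by
    refine Summable.of_nonneg_of_le (fun k => integral_nonneg fun y => norm_nonneg _)
      hbound ?_
    exact (Real.summable_pow_div_factorial (R ^ 2)).mul_right _
  have hpt : ∀ y, Real.exp (-‖x - y‖ ^ 2) * f y = ∑' k, F k y := by
    intro y
    have h1 : Real.exp (-‖x - y‖ ^ 2) = ∑' k : ℕ, (-‖x - y‖ ^ 2) ^ k / (k.factorial : ℝ) := by
      rw [Real.exp_eq_exp_ℝ, NormedSpace.exp_eq_tsum_div]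
    rw [h1, ← tsum_mul_right]
    refine tsum_congr fun k => ?_
    have h2 : ‖x - y‖ ^ (2 * k) = (‖x - y‖ ^ 2) ^ k := pow_mul _ 2 k
    have h3 : (-‖x - y‖ ^ 2) ^ k = (-1 : ℝ) ^ k * (‖x - y‖ ^ 2) ^ k := neg_pow _ _
    simp only [hF, h2, h3, div_eq_mul_inv]
    ring
  calc (∫ y, Real.exp (-‖x - y‖ ^ 2) * f y) = ∫ y, ∑' k, F k y := by
        exact integral_congr_ae (Filter.Eventually.of_forall hpt)
    _ = ∑' k, ∫ y, F k y := (integral_tsum_of_summable_integral_norm hFi hsum).symm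
    _ = 0 := by
        have : ∀ k : ℕ, (∫ y, F k y) = 0 := by
          intro k
          simp only [hF]
          rw [integral_const_mul, hQ k x, mul_zero]
        simp [this]

end VQAux

theorem vanishing_Qk_implies_zero (d : ℕ) (f : EuclideanSpace ℝ (Fin d) → ℝ)
    (hf : Continuous f) (hsupp : HasCompactSupport f)
    (hQ : ∀ k : ℕ, ∀ x : EuclideanSpace ℝ (Fin d),
      (∫ y : EuclideanSpace ℝ (Fin d), ‖x - y‖ ^ (2 * k) * f y) = 0) :
    f = 0 := by
  classical
  set g : EuclideanSpace ℝ (Fin d) → ℝ := fun y => Real.exp (-‖y‖ ^ 2) * f y with hg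
  have hgc : Continuous g := (Real.continuous_exp.comp (continuous_norm.pow 2).neg).mul hf
  have hgs : HasCompactSupport g := hsupp.mul_left
  -- Step B : vanishing of exponential moments of g
  have hB : ∀ x : EuclideanSpace ℝ (Fin d),
      (∫ y : EuclideanSpace ℝ (Fin d), Real.exp ⟪x, y⟫ * g y) = 0 := by
    intro x
    have h := vq_aux_expA f hf hsupp hQ ((2:ℝ)⁻¹ • x)
    have hexp : ∀ y, Real.exp (-‖(2:ℝ)⁻¹ • x - y‖ ^ 2) * f y
        = Real.exp (-‖(2:ℝ)⁻¹ • x‖ ^ 2) * (Real.exp ⟪x, y⟫ * g y) := by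
      intro y
      have hn := norm_sub_sq_real ((2:ℝ)⁻¹ • x) y
      have hi : ⟪(2:ℝ)⁻¹ • x, y⟫ = (2:ℝ)⁻¹ * ⟪x, y⟫ := real_inner_smul_left _ _ _
      simp only [hg]
      have hsum : (-‖(2:ℝ)⁻¹ • x - y‖ ^ 2)
          = (-‖(2:ℝ)⁻¹ • x‖ ^ 2) + (⟪x, y⟫ + (-‖y‖ ^ 2)) := by
        rw [hn, hi]; ring
      rw [hsum, Real.exp_add, Real.exp_add]
      ring
    simp_rw [hexp] at h
    rw [integral_const_mul] at h
    exact (mul_eq_zero.mp h).resolve_left (Real.exp_ne_zero _)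
  -- the exponential functions
  set S : Set (EuclideanSpace ℝ (Fin d) → ℝ) :=
    Set.range (fun z : EuclideanSpace ℝ (Fin d) => fun y => Real.exp ⟪z, y⟫) with hS
  have hSmul : ∀ h1 ∈ S, ∀ h2 ∈ S, h1 * h2 ∈ S := by
    rintro _ ⟨z1, rfl⟩ _ ⟨z2, rfl⟩
    exact ⟨z1 + z2, by ext y; simp [Pi.mul_apply, inner_add_left, Real.exp_add]⟩
  have hspanmul : ∀ h1 ∈ Submodule.span ℝ S, ∀ h2 ∈ Submodule.span ℝ S,
      h1 * h2 ∈ Submodule.span ℝ S := by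
    intro h1 hh1 h2 hh2
    have hm := Submodule.mul_mem_mul hh1 hh2
    rw [Submodule.span_mul_span] at hm
    refine Submodule.span_mono ?_ hm
    rintro _ ⟨a, ha, b, hb, rfl⟩
    exact hSmul a ha b hb
  have hint : ∀ (h : EuclideanSpace ℝ (Fin d) → ℝ), Continuous h →
      Integrable (fun y => h y * g y) := fun h hc =>
    (hc.mul hgc).integrable_of_hasCompactSupport hgs.mul_left
  -- Step C : vanishing against the linear span
  have hC : ∀ h ∈ Submodule.span ℝ S, Continuous h ∧ (∫ y, h y * g y) = 0 := by
    intro h hh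
    induction hh using Submodule.span_induction with
    | mem q hq =>
      obtain ⟨z, rfl⟩ := hq
      exact ⟨Real.continuous_exp.comp (continuous_const.inner continuous_id), hB z⟩
    | zero => exact ⟨continuous_const, by simp⟩
    | add q1 q2 h1 h2 ih1 ih2 =>
      refine ⟨ih1.1.add ih2.1, ?_⟩
      have : (∫ y, (q1 + q2) y * g y) = (∫ y, q1 y * g y) + ∫ y, q2 y * g y := by
        simp_rw [Pi.add_apply, add_mul]
        exact integral_add (hint q1 ih1.1) (hint q2 ih2.1)
      rw [this, ih1.2, ih2.2, add_zero]
    | smul a q hq ih =>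
      refine ⟨ih.1.const_smul a, ?_⟩
      have : (∫ y, (a • q) y * g y) = a * ∫ y, q y * g y := by
        simp_rw [Pi.smul_apply, smul_eq_mul, mul_assoc]
        exact integral_const_mul a _
      rw [this, ih.2, mul_zero]
  -- Stone-Weierstrass on the support
  set K : Set (EuclideanSpace ℝ (Fin d)) := tsupport f with hK
  haveI : CompactSpace K := isCompact_iff_compactSpace.mp hsupp
  set eK : EuclideanSpace ℝ (Fin d) → C(K, ℝ) :=
    fun z => ⟨fun y => Real.exp ⟪z, (y : EuclideanSpace ℝ (Fin d))⟫,
      Real.continuous_exp.comp (continuous_const.inner continuous_subtype_val)⟩ with heK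
  set A : Subalgebra ℝ C(K, ℝ) := Algebra.adjoin ℝ (Set.range eK) with hA
  have hAsep : A.SeparatesPoints := by
    intro y1 y2 hne
    set z : EuclideanSpace ℝ (Fin d) := (y1 : EuclideanSpace ℝ (Fin d)) - y2 with hz
    refine ⟨⇑(eK z), ⟨eK z, Algebra.subset_adjoin ⟨z, rfl⟩, rfl⟩, ?_⟩
    have h0 : z ≠ 0 := sub_ne_zero.mpr (Subtype.coe_injective.ne hne)
    have hin : ⟪z, (y1 : EuclideanSpace ℝ (Fin d))⟫
        ≠ ⟪z, (y2 : EuclideanSpace ℝ (Fin d))⟫ := by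
      intro hcon
      have hzz : ⟪z, z⟫ = (0 : ℝ) := by
        rw [hz]
        rw [inner_sub_right, hcon, sub_self]
      exact inner_self_ne_zero.mpr h0 hzz
    simp only [heK, ContinuousMap.coe_mk]
    exact fun hcon => hin (Real.exp_eq_exp.mp hcon)
  -- representation of adjoin elements by global span elements
  have hRep : ∀ p ∈ A, ∃ h ∈ Submodule.span ℝ S,
      ∀ y : K, p y = h (y : EuclideanSpace ℝ (Fin d)) := by
    intro p hp
    induction hp using Algebra.adjoin_induction with
    | mem q hq =>
      obtain ⟨z, rfl⟩ := hq
      exact ⟨_, Submodule.subset_span ⟨z, rfl⟩, fun y => rfl⟩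
    | algebraMap r =>
      refine ⟨r • (fun y => Real.exp ⟪(0 : EuclideanSpace ℝ (Fin d)), y⟫),
        Submodule.smul_mem _ _ (Submodule.subset_span ⟨0, rfl⟩), fun y => ?_⟩
      simp [inner_zero_left]
    | add q1 q2 h1 h2 ih1 ih2 =>
      obtain ⟨f1, hf1, e1⟩ := ih1; obtain ⟨f2, hf2, e2⟩ := ih2
      exact ⟨f1 + f2, Submodule.add_mem _ hf1 hf2, fun y => by
        simp [e1 y, e2 y]⟩
    | mul q1 q2 h1 h2 ih1 ih2 =>
      obtain ⟨f1, hf1, e1⟩ := ih1; obtain ⟨f2, hf2, e2⟩ := ih2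
      exact ⟨f1 * f2, hspanmul _ hf1 _ hf2, fun y => by
        simp [e1 y, e2 y]⟩
  -- approximate g on K
  have hgK : Continuous (fun y : K => g (y : EuclideanSpace ℝ (Fin d))) :=
    hgc.comp continuous_subtype_val
  set gK : C(K, ℝ) := ⟨fun y => g (y : EuclideanSpace ℝ (Fin d)), hgK⟩ with hgKdef
  have hIg2 : Integrable (fun y => g y * g y) := hint g hgc
  have habsg : Integrable (fun y => |g y|) := (hgc.integrable_of_hasCompactSupport hgs).abs
  have key : ∀ ε : ℝ, 0 < ε → (∫ y, g y * g y) ≤ ε * ∫ y, |g y| := by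
    intro ε hε
    obtain ⟨p, hp⟩ := ContinuousMap.exists_mem_subalgebra_near_continuousMap_of_separatesPoints
      A hAsep gK ε hε
    obtain ⟨h, hhmem, hhrep⟩ := hRep (p : C(K, ℝ)) p.2
    obtain ⟨hhc, hhint⟩ := hC h hhmem
    have heq : (∫ y, g y * g y) = ∫ y, g y * (g y - h y) := by
      have hptw : ∀ y, g y * (g y - h y) = g y * g y - h y * g y := fun y => by ring
      simp_rw [hptw]
      rw [integral_sub hIg2 (hint h hhc), hhint, sub_zero]
    rw [heq]
    have hbound : ∀ y, g y * (g y - h y) ≤ ε * |g y| := by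
      intro y
      by_cases hy : g y = 0
      · simp [hy]
      · have hyK : y ∈ K := by
          apply subset_tsupport f
          intro hfy
          exact hy (by simp [hg, hfy])
        have hgh : |g y - h y| ≤ ε := by
          have hnorm := ContinuousMap.norm_coe_le_norm (gK - (p : C(K, ℝ))) ⟨y, hyK⟩
          have hval : (gK - (p : C(K, ℝ))) ⟨y, hyK⟩ = g y - h y := by
            simp [hgKdef, hhrep ⟨y, hyK⟩]
          rw [hval] at hnorm
          have : ‖gK - (p : C(K, ℝ))‖ = ‖(p : C(K, ℝ)) - gK‖ := by rw [norm_sub_rev]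
          calc |g y - h y| = ‖g y - h y‖ := rfl
            _ ≤ ‖gK - (p : C(K, ℝ))‖ := hnorm
            _ ≤ ε := by rw [this]; exact le_of_lt hp
        calc g y * (g y - h y) ≤ |g y * (g y - h y)| := le_abs_self _
          _ = |g y| * |g y - h y| := abs_mul _ _
          _ ≤ |g y| * ε := mul_le_mul_of_nonneg_left hgh (abs_nonneg _)
          _ = ε * |g y| := mul_comm _ _
    rw [← integral_const_mul]
    refine integral_mono ?_ (habsg.const_mul ε) hbound
    exact ((hgc.mul (hgc.sub hhc)).integrable_of_hasCompactSupport hgs.mul_right)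
  have hI2 : (∫ y, g y * g y) = 0 := by
    have hnn : 0 ≤ ∫ y, g y * g y := integral_nonneg fun y => mul_self_nonneg _
    rcases eq_or_lt_of_le hnn with h | hpos
    · exact h.symm
    · exfalso
      set c : ℝ := ∫ y, |g y| with hc
      have hcnn : 0 ≤ c := integral_nonneg fun y => abs_nonneg _
      have hkey := key ((∫ y, g y * g y) / (2 * (c + 1))) (by positivity)
      set I : ℝ := ∫ y, g y * g y with hI
      have h1 : I / (2 * (c + 1)) * c < I := by
        rw [div_mul_eq_mul_div, div_lt_iff₀ (by positivity)]
        nlinarith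
      linarith
  have hgz : g = 0 := by
    have hcont : Continuous fun y => g y * g y := hgc.mul hgc
    have hae : (fun y => g y * g y) =ᵐ[(volume : Measure (EuclideanSpace ℝ (Fin d)))] 0 :=
      (integral_eq_zero_iff_of_nonneg (fun y => mul_self_nonneg _) hIg2).mp hI2
    have heq : (fun y => g y * g y) = (0 : EuclideanSpace ℝ (Fin d) → ℝ) :=
      (Continuous.ae_eq_iff_eq _ hcont continuous_const).mp hae
    funext y
    have := congrFun heq y
    simpa [mul_self_eq_zero] using this
  funext y
  have hy := congrFun hgz y
  simp only [hg, Pi.zero_apply] at hy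
  have := mul_eq_zero.mp hy
  rcases this with h | h
  · exact absurd h (Real.exp_ne_zero _)
  · simpa using h
end
end

section
/- If f : R^d → R is continuous, compactly supported, and even with respect to a hyperplane H (f ∘ σ = f for the reflection σ across H), and all spherical means of f centered on H vanish, then f ≡ 0. -/
/-!
Evenness lets `f` factor as `f = g ∘ Φ` with `g` continuous, where `Φ y` records the projection
of `y` onto `v⊥` and the squared distance from `y` to `H`. For a centre `x₀ ∈ H` the Gaussian
`exp (-t ‖y - x₀‖²)` is also a function of `Φ y`, and integrating in polar coordinates around
`x₀` shows that `f` is orthogonal to it. In the `Φ`-coordinates these Gaussians (with `t ≥ 0`,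
times constants) form a multiplicative monoid that separates points, so by Stone–Weierstrass `g`
is a uniform limit of their linear combinations on the compact set `Φ (supp f)`. Hence
`∫ f² = ∫ f · (g ∘ Φ) = 0`.
-/

open MeasureTheory RealInnerProductSpace
noncomputable section

/-- Spherical mean of `f` over the sphere of center `x` and radius `r`. -/
def sphMean {d : ℕ} (f : EuclideanSpace ℝ (Fin d) → ℝ)
    (x : EuclideanSpace ℝ (Fin d)) (r : ℝ) : ℝ :=
  ⨍ y : Metric.sphere (0 : EuclideanSpace ℝ (Fin d)) 1,
    f (x + r • (y : EuclideanSpace ℝ (Fin d))) ∂((volume : Measure (EuclideanSpace ℝ (Fin d))).toSphere)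

section PolarCoordinates

open Metric Set

variable {E F : Type*} [NormedAddCommGroup E] [NormedSpace ℝ E] [MeasurableSpace E]
  [BorelSpace E] [FiniteDimensional ℝ E] [Nontrivial E] [NormedAddCommGroup F] [NormedSpace ℝ F]

theorem integral_eq_integral_volumeIoiPow_integral_toSphere (μ : Measure E)
    [μ.IsAddHaarMeasure] {g : E → F} (hg : Integrable g μ) :
    ∫ x, g x ∂μ = ∫ r, ∫ y, g ((r : ℝ) • (y : E)) ∂μ.toSphere
      ∂(Measure.volumeIoiPow (Module.finrank ℝ E - 1)) := by
  have hzero : MeasurableSet ({0}ᶜ : Set E) := (measurableSet_singleton 0).compl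
  set G : sphere (0 : E) 1 × Ioi (0 : ℝ) → F := fun p => g ((p.2 : ℝ) • (p.1 : E))
  have hG : G ∘ homeomorphUnitSphereProd E = g ∘ Subtype.val := funext fun x => by
    simp only [G, Function.comp_apply, homeomorphUnitSphereProd_apply_snd_coe,
      homeomorphUnitSphereProd_apply_fst_coe, smul_inv_smul₀ (norm_ne_zero_iff.2 x.2)]
  have hmp := μ.measurePreserving_homeomorphUnitSphereProd
  have hemb := (homeomorphUnitSphereProd E).measurableEmbedding
  have hGint :
      Integrable G (μ.toSphere.prod (Measure.volumeIoiPow (Module.finrank ℝ E - 1))) := by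
    rw [← hmp.integrable_comp_emb hemb, hG,
      ← (MeasurableEmbedding.subtype_coe hzero).integrable_map_iff, map_comap_subtype_coe hzero]
    exact hg.integrableOn
  calc ∫ x, g x ∂μ = ∫ x : ({0}ᶜ : Set E), g x ∂(μ.comap Subtype.val) := by
        rw [integral_subtype_comap hzero, restrict_compl_singleton]
    _ = ∫ p, G p ∂(μ.toSphere.prod (Measure.volumeIoiPow (Module.finrank ℝ E - 1))) := by
        rw [← hmp.integral_comp hemb G]; exact integral_congr_ae (.of_forall (congrFun hG.symm))
    _ = _ := integral_prod_symm G hGint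

end PolarCoordinates

section Gaussian

variable {E : Type*} [NormedAddCommGroup E]

-- With `p.2 = h²`, this is the Gaussian `exp (s - t ‖(p.1, h) - (w, 0)‖²)` in `E × ℝ`.
variable (E) in
def gaussianProd (t : ℝ) (w : E) (s : ℝ) : C(E × ℝ, ℝ) :=
  ⟨fun p => Real.exp (s - t * (‖p.1 - w‖ ^ 2 + p.2)), by fun_prop⟩

@[simp]
theorem gaussianProd_apply (t : ℝ) (w : E) (s : ℝ) (p : E × ℝ) :
    gaussianProd E t w s p = Real.exp (s - t * (‖p.1 - w‖ ^ 2 + p.2)) := rfl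

variable [InnerProductSpace ℝ E]

theorem mul_norm_sub_sq_add_mul_norm_sub_sq {t t' : ℝ} (h : t + t' ≠ 0) (z a b : E) :
    t * ‖z - a‖ ^ 2 + t' * ‖z - b‖ ^ 2 =
      (t + t') * ‖z - ((t / (t + t')) • a + (t' / (t + t')) • b)‖ ^ 2 +
        t * t' / (t + t') * ‖a - b‖ ^ 2 := by
  simp only [← real_inner_self_eq_norm_sq, inner_sub_left, inner_sub_right, inner_add_left,
    inner_add_right, real_inner_smul_left, real_inner_smul_right, real_inner_comm a b,
    real_inner_comm z a, real_inner_comm z b]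
  field_simp
  ring

theorem gaussianProd_mul_gaussianProd {t t' : ℝ} (ht : 0 ≤ t) (ht' : 0 ≤ t') (w w' : E)
    (s s' : ℝ) :
    gaussianProd E t w s * gaussianProd E t' w' s' =
      gaussianProd E (t + t') ((t / (t + t')) • w + (t' / (t + t')) • w')
        (s + s' - t * t' / (t + t') * ‖w - w'‖ ^ 2) := by
  ext p
  rw [ContinuousMap.mul_apply, gaussianProd_apply, gaussianProd_apply, gaussianProd_apply,
    ← Real.exp_add]
  congr 1
  rcases eq_or_ne (t + t') 0 with h | h
  · obtain ⟨rfl, rfl⟩ : t = 0 ∧ t' = 0 := ⟨by linarith, by linarith⟩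
    simp
  · linear_combination -mul_norm_sub_sq_add_mul_norm_sub_sq h p.1 w w'

variable (E) in
def gaussianSubmonoid : Submonoid C(E × ℝ, ℝ) where
  carrier := {q | ∃ t w s, 0 ≤ t ∧ gaussianProd E t w s = q}
  one_mem' := ⟨0, 0, 0, le_rfl, by ext; simp⟩
  mul_mem' := by
    rintro _ _ ⟨t, w, s, ht, rfl⟩ ⟨t', w', s', ht', rfl⟩
    exact ⟨_, _, _, add_nonneg ht ht', (gaussianProd_mul_gaussianProd ht ht' w w' s s').symm⟩

theorem gaussianProd_mem_gaussianSubmonoid {t : ℝ} (ht : 0 ≤ t) (w : E) (s : ℝ) :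
    gaussianProd E t w s ∈ gaussianSubmonoid E := ⟨t, w, s, ht, rfl⟩

theorem separatesPoints_adjoin_gaussianSubmonoid :
    (Algebra.adjoin ℝ (gaussianSubmonoid E : Set C(E × ℝ, ℝ))).SeparatesPoints := by
  rintro ⟨x, m⟩ ⟨x', m'⟩ hne
  by_contra! h
  have hcentre : ∀ w, ‖x - w‖ ^ 2 + m = ‖x' - w‖ ^ 2 + m' := fun w => by
    have := h _ ⟨gaussianProd E 1 w 0,
      Algebra.subset_adjoin (gaussianProd_mem_gaussianSubmonoid zero_le_one w 0), rfl⟩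
    simpa only [gaussianProd_apply, Real.exp_eq_exp, one_mul, zero_sub, neg_inj] using this
  -- comparing the Gaussians centred at `x` and at `x'` forces `‖x - x'‖ = 0`
  have h₁ := hcentre x
  have h₂ := hcentre x'
  rw [sub_self, norm_zero] at h₁ h₂
  rw [norm_sub_rev x'] at h₁
  have hx : ‖x - x'‖ ^ 2 = 0 := by linarith
  exact hne (Prod.ext (sub_eq_zero.mp (by simpa using hx)) (by linarith))

end Gaussian

section SphericalMean

open Metric

variable {d : ℕ} [Nontrivial (EuclideanSpace ℝ (Fin d))]

theorem integral_sphere_eq_zero_of_sphMean_eq_zero {f : EuclideanSpace ℝ (Fin d) → ℝ}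
    {x : EuclideanSpace ℝ (Fin d)} {r : ℝ} (h : sphMean f x r = 0) :
    ∫ y : sphere (0 : EuclideanSpace ℝ (Fin d)) 1,
      f (x + r • (y : EuclideanSpace ℝ (Fin d)))
      ∂(volume : Measure (EuclideanSpace ℝ (Fin d))).toSphere = 0 := by
  have : NeZero (volume : Measure (EuclideanSpace ℝ (Fin d))).toSphere :=
    ⟨Measure.toSphere_ne_zero _⟩
  rw [sphMean, average_eq, smul_eq_zero] at h
  exact h.resolve_left (inv_ne_zero measureReal_univ_pos.ne')

theorem integral_mul_radial_eq_zero_of_sphMean_eq_zero {f : EuclideanSpace ℝ (Fin d) → ℝ}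
    (hf : Continuous f) (hfs : HasCompactSupport f) {x : EuclideanSpace ℝ (Fin d)}
    (h : ∀ r, 0 < r → sphMean f x r = 0) {w : ℝ → ℝ} (hw : Continuous w) :
    ∫ y, f y * w ‖y - x‖ = 0 := by
  have hint : Integrable (fun z => f (x + z) * w ‖z‖) :=
    Continuous.integrable_of_hasCompactSupport
      ((hf.comp (continuous_const_add x)).mul (hw.comp continuous_norm))
      (hfs.comp_homeomorph (Homeomorph.addLeft x)).mul_right
  rw [← integral_add_left_eq_self _ x]
  simp only [add_sub_cancel_left]
  rw [integral_eq_integral_volumeIoiPow_integral_toSphere _ hint]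
  refine integral_eq_zero_of_ae (.of_forall fun r => ?_)
  have hnorm : ∀ y : sphere (0 : EuclideanSpace ℝ (Fin d)) 1,
      ‖(r : ℝ) • (y : EuclideanSpace ℝ (Fin d))‖ = r := fun y => by
    rw [norm_smul, norm_eq_of_mem_sphere y, mul_one, Real.norm_of_nonneg r.2.out.le]
  simp only [hnorm, integral_mul_const,
    integral_sphere_eq_zero_of_sphMean_eq_zero (h r r.2), zero_mul, Pi.zero_apply]

end SphericalMean

section Uniqueness

variable {X Y : Type*} [TopologicalSpace X] [MeasurableSpace X] [OpensMeasurableSpace X]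
  [TopologicalSpace Y] (μ : Measure X) [IsFiniteMeasureOnCompacts μ]
  {f : X → ℝ} {Φ : X → Y}

theorem integrable_mul_comp (hf : Continuous f) (hfs : HasCompactSupport f) (hΦ : Continuous Φ)
    (q : C(Y, ℝ)) : Integrable (fun x => f x * q (Φ x)) μ :=
  (hf.mul (q.continuous.comp hΦ)).integrable_of_hasCompactSupport hfs.mul_right

theorem integral_mul_comp_eq_zero_of_mem_span (hf : Continuous f) (hfs : HasCompactSupport f)
    (hΦ : Continuous Φ) {S : Set C(Y, ℝ)} (hS : ∀ q ∈ S, ∫ x, f x * q (Φ x) ∂μ = 0)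
    {q : C(Y, ℝ)} (hq : q ∈ Submodule.span ℝ S) : ∫ x, f x * q (Φ x) ∂μ = 0 := by
  induction hq using Submodule.span_induction with
  | mem q hq => exact hS q hq
  | zero => simp
  | add q q' _ _ h h' =>
    simp only [ContinuousMap.add_apply, mul_add, h, h', add_zero,
      integral_add (integrable_mul_comp μ hf hfs hΦ q) (integrable_mul_comp μ hf hfs hΦ q')]
  | smul a q _ h =>
    simp only [ContinuousMap.smul_apply, smul_eq_mul, mul_left_comm _ a, integral_const_mul, h,
      mul_zero]

theorem integral_sq_le_of_integral_mul_comp_eq_zero (hf : Continuous f)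
    (hfs : HasCompactSupport f) (hΦ : Continuous Φ) {g q : C(Y, ℝ)} (hfg : ∀ x, f x = g (Φ x))
    (hq : ∫ x, f x * q (Φ x) ∂μ = 0) {ε : ℝ} (hqg : ∀ y ∈ Φ '' tsupport f, ‖q y - g y‖ < ε) :
    ∫ x, f x ^ 2 ∂μ ≤ ε * ∫ x, |f x| ∂μ := by
  have hint2 : Integrable (fun x => f x ^ 2) μ :=
    (hf.pow 2).integrable_of_hasCompactSupport (hfs.comp_left (zero_pow two_ne_zero))
  have hpt : ∀ x, f x ^ 2 - f x * q (Φ x) ≤ |f x| * ε := fun x => by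
    by_cases hx : x ∈ tsupport f
    · have hclose := (hqg (Φ x) (Set.mem_image_of_mem Φ hx)).le
      rw [Real.norm_eq_abs, abs_sub_comm, ← hfg] at hclose
      calc f x ^ 2 - f x * q (Φ x) ≤ |f x * (f x - q (Φ x))| := by
            rw [sq, ← mul_sub]; exact le_abs_self _
        _ ≤ |f x| * ε := by rw [abs_mul]; gcongr
    · simp [image_eq_zero_of_notMem_tsupport hx]
  calc ∫ x, f x ^ 2 ∂μ = ∫ x, (f x ^ 2 - f x * q (Φ x)) ∂μ := by
        rw [integral_sub hint2 (integrable_mul_comp μ hf hfs hΦ q), hq, sub_zero]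
    _ ≤ ∫ x, |f x| * ε ∂μ := integral_mono (hint2.sub (integrable_mul_comp μ hf hfs hΦ q))
          ((hf.integrable_of_hasCompactSupport hfs).abs.mul_const ε) hpt
    _ = ε * ∫ x, |f x| ∂μ := by rw [integral_mul_const, mul_comm]

variable [μ.IsOpenPosMeasure]

theorem eq_zero_of_forall_integral_mul_comp_eq_zero (hf : Continuous f)
    (hfs : HasCompactSupport f) (hΦ : Continuous Φ) (g : C(Y, ℝ)) (hfg : ∀ x, f x = g (Φ x))
    {M : Submonoid C(Y, ℝ)} (hM : (Algebra.adjoin ℝ (M : Set C(Y, ℝ))).SeparatesPoints)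
    (hfM : ∀ q ∈ M, ∫ x, f x * q (Φ x) ∂μ = 0) : f = 0 := by
  set C := ∫ x, |f x| ∂μ
  have hC : 0 ≤ C := integral_nonneg fun x => abs_nonneg _
  have hsq : ∫ x, f x ^ 2 ∂μ ≤ 0 := le_of_forall_gt_imp_ge_of_dense fun δ hδ => by
    obtain ⟨q, hqM, hqg⟩ :=
      ContinuousMap.exists_mem_subalgebra_near_continuous_of_isCompact_of_separatesPoints hM
        g (hfs.image hΦ) (div_pos hδ (by linarith : 0 < C + 1))
    rw [← Subalgebra.mem_toSubmodule, Algebra.adjoin_eq_span, Submonoid.closure_eq] at hqM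
    calc ∫ x, f x ^ 2 ∂μ ≤ δ / (C + 1) * C :=
          integral_sq_le_of_integral_mul_comp_eq_zero μ hf hfs hΦ hfg
            (integral_mul_comp_eq_zero_of_mem_span μ hf hfs hΦ hfM hqM) hqg
      _ ≤ δ := by rw [div_mul_eq_mul_div, div_le_iff₀ (by linarith)]; nlinarith
  funext x
  by_contra hx
  exact hsq.not_gt ((hf.pow 2).integral_pos_of_hasCompactSupport_nonneg_nonzero
    (hfs.comp_left (zero_pow two_ne_zero)) (fun y => sq_nonneg (f y)) (pow_ne_zero 2 hx))

end Uniqueness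

section Fold

variable {E : Type*} [NormedAddCommGroup E] [InnerProductSpace ℝ E] (v : E) (c : ℝ)

-- For `‖v‖ = 1`: the projection of `y` onto `v⊥` and the squared distance from `y` to
-- `H = {⟪x, v⟫ = c}`. It identifies `y` with its mirror image in `H` and nothing else.
def foldCoords (y : E) : E × ℝ := (y - ⟪y, v⟫ • v, (⟪y, v⟫ - c) ^ 2)

theorem continuous_foldCoords : Continuous (foldCoords v c) := by
  unfold foldCoords; fun_prop

theorem exists_comp_foldCoords_of_reflection_invariant {f : E → ℝ} (hf : Continuous f)
    (heven : ∀ y, f (y - (2 * (⟪y, v⟫ - c)) • v) = f y) :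
    ∃ g : C(E × ℝ, ℝ), ∀ y, f y = g (foldCoords v c y) := by
  refine ⟨⟨fun p => f (p.1 + (c + √p.2) • v), by fun_prop⟩, fun y => ?_⟩
  simp only [ContinuousMap.coe_mk, foldCoords, Real.sqrt_sq_eq_abs]
  rcases le_total c ⟪y, v⟫ with h | h
  · rw [abs_of_nonneg (sub_nonneg.2 h), add_sub_cancel, sub_add_cancel]
  · rw [abs_of_nonpos (sub_nonpos.2 h), ← heven]
    congr 1
    module

-- `w - ⟪w, v⟫ • v + c • v` is the point of `H` over the projection of `w` onto `v⊥`.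
theorem norm_sub_sq_add_foldCoords_snd (hv : ‖v‖ = 1) (y w : E) :
    ‖(foldCoords v c y).1 - w‖ ^ 2 + (foldCoords v c y).2 =
      ‖y - (w - ⟪w, v⟫ • v + c • v)‖ ^ 2 + ⟪w, v⟫ ^ 2 := by
  have hvv : ⟪v, v⟫ = 1 := by rw [real_inner_self_eq_norm_sq, hv, one_pow]
  simp only [foldCoords, ← real_inner_self_eq_norm_sq, inner_sub_left, inner_sub_right,
    inner_add_left, inner_add_right, real_inner_smul_left, real_inner_smul_right, hvv,
    real_inner_comm v, real_inner_comm w y]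
  ring

end Fold

theorem even_function_with_vanishing_means_is_zero (d : ℕ)
    (v : EuclideanSpace ℝ (Fin d)) (hv : ‖v‖ = 1) (c : ℝ)
    (H : Set (EuclideanSpace ℝ (Fin d))) (hH : H = {x | ⟪x, v⟫ = c})
    (σ : EuclideanSpace ℝ (Fin d) → EuclideanSpace ℝ (Fin d))
    (hσ : ∀ x, σ x = x - (2 * (⟪x, v⟫ - c)) • v)
    (f : EuclideanSpace ℝ (Fin d) → ℝ) (hf : Continuous f) (hsupp : HasCompactSupport f)
    (heven : ∀ x, f (σ x) = f x)
    (hvanish : ∀ x ∈ H, ∀ r : ℝ, 0 < r → sphMean f x r = 0) :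
    f = 0 := by
  have : Nontrivial (EuclideanSpace ℝ (Fin d)) := ⟨v, 0, by rintro rfl; simp at hv⟩
  obtain ⟨g, hfg⟩ := exists_comp_foldCoords_of_reflection_invariant v c hf fun y => by
    rw [← hσ, heven]
  refine eq_zero_of_forall_integral_mul_comp_eq_zero volume hf hsupp (continuous_foldCoords v c)
    g hfg separatesPoints_adjoin_gaussianSubmonoid ?_
  rintro _ ⟨t, w, s, -, rfl⟩
  have hcentre : w - ⟪w, v⟫ • v + c • v ∈ H := by
    simp [hH, inner_add_left, inner_sub_left, real_inner_smul_left, hv]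
  simp only [gaussianProd_apply, norm_sub_sq_add_foldCoords_snd v c hv]
  exact integral_mul_radial_eq_zero_of_sphMean_eq_zero hf hsupp (hvanish _ hcentre)
    (w := fun r => Real.exp (s - t * (r ^ 2 + ⟪w, v⟫ ^ 2))) (by fun_prop)
end
end

section
/- For the 2D Radon transform g(s, ω) = ∫_{x·ω = s} f(x) dx of a continuous compactly supported f : R^2 → R, the k-th moment G_k(ω) = ∫_{-∞}^{∞} s^k g(s, ω) ds, regarded as a function of the unit vector ω, is the restriction to the unit circle of a homogeneous polynomial of degree k in ω. -/
/-!
Parametrising the plane by `x = s • ω + t • perp ω`, which is an isometry when `‖ω‖ = 1`, and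
using Fubini turns the `k`-th moment of the Radon transform into `∫ ⟪x, ω⟫ ^ k * f x dx`.
Expanding `⟪x, ω⟫ ^ k` by the multinomial theorem shows that this is a homogeneous polynomial of
degree `k` in the coordinates of `ω`, whose coefficients are moments of `f`.
-/

open MeasureTheory
noncomputable section

abbrev E2 := EuclideanSpace ℝ (Fin 2)

/-- The vector `ω` rotated by `π/2` (a unit vector orthogonal to `ω`). -/
def perp (ω : E2) : E2 :=
  (EuclideanSpace.equiv (Fin 2) ℝ).symm ![-(ω 1), ω 0]

/-- The 2D Radon transform: the integral of `f` over the line `{x : x·ω = s}`,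
parametrized as `s • ω + t • perp ω`, `t ∈ ℝ`. -/
def radon2D (f : E2 → ℝ) (s : ℝ) (ω : E2) : ℝ :=
  ∫ t : ℝ, f (s • ω + t • perp ω)

open scoped RealInnerProductSpace

section Moments

variable {ι : Type*} [Fintype ι] [DecidableEq ι]

theorem EuclideanSpace.inner_pow_eq_sum_piAntidiag (x ω : EuclideanSpace ℝ ι) (k : ℕ) :
    ⟪x, ω⟫ ^ k = ∑ m ∈ Finset.univ.piAntidiag k,
      (Nat.multinomial Finset.univ m : ℝ) * (∏ i, ω i ^ m i) * ∏ i, x i ^ m i := by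
  rw [PiLp.inner_apply, Finset.sum_pow_eq_sum_piAntidiag]
  refine Finset.sum_congr rfl fun m _ => ?_
  simp only [RCLike.inner_apply, conj_trivial, mul_pow, Finset.prod_mul_distrib]
  ring

theorem exists_isHomogeneous_eval_eq_integral_inner_pow_mul
    {μ : Measure (EuclideanSpace ℝ ι)} [IsFiniteMeasureOnCompacts μ]
    {f : EuclideanSpace ℝ ι → ℝ} (hf : Continuous f) (hsupp : HasCompactSupport f) (k : ℕ) :
    ∃ P : MvPolynomial ι ℝ, P.IsHomogeneous k ∧ ∀ ω : EuclideanSpace ℝ ι,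
      ∫ x, ⟪x, ω⟫ ^ k * f x ∂μ = MvPolynomial.eval (fun i => ω i) P := by
  refine ⟨∑ m ∈ Finset.univ.piAntidiag k,
    MvPolynomial.C ((Nat.multinomial Finset.univ m : ℝ) * ∫ x, (∏ i, x i ^ m i) * f x ∂μ) *
      ∏ i, MvPolynomial.X i ^ m i, ?_, fun ω => ?_⟩
  · refine MvPolynomial.IsHomogeneous.sum _ _ _ fun m hm => ?_
    have hX := MvPolynomial.IsHomogeneous.prod Finset.univ _ m fun i _ =>
      MvPolynomial.isHomogeneous_X_pow (R := ℝ) i (m i)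
    rw [(Finset.mem_piAntidiag.1 hm).1] at hX
    exact hX.C_mul _
  · have hint (m : ι → ℕ) : Integrable (fun x => (∏ i, x i ^ m i) * f x) μ :=
      ((by fun_prop : Continuous fun x : EuclideanSpace ℝ ι => ∏ i, x i ^ m i).mul hf
        ).integrable_of_hasCompactSupport hsupp.mul_left
    simp_rw [EuclideanSpace.inner_pow_eq_sum_piAntidiag, Finset.sum_mul, mul_assoc]
    rw [integral_finsetSum _ fun m _ => ((hint m).const_mul _).const_mul _]
    simp only [integral_const_mul, map_sum, MvPolynomial.eval_mul, MvPolynomial.eval_C,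
      MvPolynomial.eval_prod, MvPolynomial.eval_pow, MvPolynomial.eval_X]
    exact Finset.sum_congr rfl fun m _ => by ring

end Moments

theorem MeasureTheory.integral_eq_integral_integral_of_orthonormal_fin_two
    {F E : Type*} [NormedAddCommGroup F] [InnerProductSpace ℝ F] [FiniteDimensional ℝ F]
    [MeasurableSpace F] [BorelSpace F] [NormedAddCommGroup E] [NormedSpace ℝ E]
    (hF : Module.finrank ℝ F = 2) {v : Fin 2 → F} (hv : Orthonormal ℝ v) {g : F → E}
    (hg : Integrable g) :
    ∫ x, g x = ∫ s : ℝ, ∫ t : ℝ, g (s • v 0 + t • v 1) := by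
  let b : OrthonormalBasis (Fin 2) ℝ F :=
    (basisOfOrthonormalOfCardEqFinrank hv (by simp [hF])).toOrthonormalBasis (by simpa using hv)
  let e : ℝ × ℝ ≃ᵐ F :=
    (MeasurableEquiv.finTwoArrow.symm.trans (MeasurableEquiv.toLp 2 _)).trans
      b.measurableEquiv.symm
  have he : MeasurePreserving e :=
    b.measurePreserving_measurableEquiv.symm.comp <|
      (EuclideanSpace.volume_preserving_symm_measurableEquiv_toLp (Fin 2)).symm.comp
        (volume_preserving_finTwoArrow ℝ).symm
  have he_apply (p : ℝ × ℝ) : e p = p.1 • v 0 + p.2 • v 1 := by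
    simp [e, b, OrthonormalBasis.measurableEquiv, Fin.sum_univ_two]
  have hge : Integrable (fun p => g (e p)) (volume.prod volume) :=
    (he.integrable_comp_emb e.measurableEmbedding).2 hg
  rw [← he.integral_comp', Measure.volume_eq_prod, integral_prod _ hge]
  simp only [he_apply]

@[simp] theorem perp_apply_zero (ω : E2) : perp ω 0 = -ω 1 := by simp [perp]

@[simp] theorem perp_apply_one (ω : E2) : perp ω 1 = ω 0 := by simp [perp]

theorem inner_perp_self (ω : E2) : ⟪perp ω, ω⟫ = 0 := by
  simp [PiLp.inner_apply, Fin.sum_univ_two]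
  ring

theorem norm_perp (ω : E2) : ‖perp ω‖ = ‖ω‖ := by
  simp [EuclideanSpace.norm_eq, Fin.sum_univ_two, add_comm]

theorem orthonormal_perp {ω : E2} (hω : ‖ω‖ = 1) : Orthonormal ℝ ![ω, perp ω] := by
  refine ⟨fun i => by fin_cases i <;> simp [hω, norm_perp], fun i j hij => ?_⟩
  fin_cases i <;> fin_cases j <;> simp_all [inner_perp_self, real_inner_comm (perp ω) ω]

theorem inner_smul_add_smul_perp {ω : E2} (hω : ‖ω‖ = 1) (s t : ℝ) :
    ⟪s • ω + t • perp ω, ω⟫ = s := by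
  simp [inner_add_left, inner_smul_left, inner_perp_self, hω]

theorem radon_moment_conditions (f : E2 → ℝ)
    (hf : Continuous f) (hsupp : HasCompactSupport f) (k : ℕ) :
    ∃ P : MvPolynomial (Fin 2) ℝ, P.IsHomogeneous k ∧
      ∀ ω : E2, ‖ω‖ = 1 →
        (∫ s : ℝ, s ^ k * radon2D f s ω) = MvPolynomial.eval (fun i => ω i) P := by
  obtain ⟨P, hP, hmoment⟩ :=
    exists_isHomogeneous_eval_eq_integral_inner_pow_mul (μ := volume) hf hsupp k
  refine ⟨P, hP, fun ω hω => ?_⟩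
  have hint : Integrable (fun x : E2 => ⟪x, ω⟫ ^ k * f x) :=
    ((by fun_prop : Continuous fun x : E2 => ⟪x, ω⟫ ^ k).mul hf).integrable_of_hasCompactSupport
      hsupp.mul_left
  rw [← hmoment ω, integral_eq_integral_integral_of_orthonormal_fin_two finrank_euclideanSpace_fin
    (orthonormal_perp hω) hint]
  simp [radon2D, ← integral_const_mul, inner_smul_add_smul_perp hω]
end
end
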